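/- The core of a finite digraph is unique up to isomorphism: if B and C are both cores, both are retracts of the finite digraph A (or more generally both are homomorphically equivalent to A), then B and C are isomorphic as digraphs. -/
import Mathlib


/-- Uniqueness of the core: if finite digraphs `B` and `C` are both cores
(every endomorphism is an automorphism) and both are homomorphically
equivalent to a finite digraph `A`, then `B` and `C` are isomorphic. -/
theorem core_unique {A B C : Type*} [Fintype A] [Fintype B] [Fintype C]
    (EA : A → A → Prop) (EB : B → B → Prop) (EC : C → C → Prop)
    (hBcore : ∀ f : B → B, (∀ u v, EB u v → EB (f u) (f v)) →
      Function.Bijective f ∧ ∀ u v, EB (f u) (f v) → EB u v)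
    (hCcore : ∀ f : C → C, (∀ u v, EC u v → EC (f u) (f v)) →
      Function.Bijective f ∧ ∀ u v, EC (f u) (f v) → EC u v)
    (hBA : ∃ f : B → A, ∀ u v, EB u v → EA (f u) (f v))
    (hAB : ∃ f : A → B, ∀ u v, EA u v → EB (f u) (f v))
    (hCA : ∃ f : C → A, ∀ u v, EC u v → EA (f u) (f v))
    (hAC : ∃ f : A → C, ∀ u v, EA u v → EC (f u) (f v)) :
    ∃ φ : B → C, Function.Bijective φ ∧ ∀ u v, EB u v ↔ EC (φ u) (φ v) := by
  obtain ⟨ba, hba⟩ := hBA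
  obtain ⟨ab, hab⟩ := hAB
  obtain ⟨ca, hca⟩ := hCA
  obtain ⟨ac, hac⟩ := hAC
  -- g : B → C, h : C → B
  set g : B → C := fun b => ac (ba b) with hg
  set h : C → B := fun c => ab (ca c) with hh
  have hgh : ∀ u v, EB u v → EC (g u) (g v) := fun u v e => hac _ _ (hba _ _ e)
  have hhg : ∀ u v, EC u v → EB (h u) (h v) := fun u v e => hab _ _ (hca _ _ e)
  have hBend := hBcore (h ∘ g) (fun u v e => hhg _ _ (hgh _ _ e))
  have hCend := hCcore (g ∘ h) (fun u v e => hgh _ _ (hhg _ _ e))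
  refine ⟨g, ⟨?_, ?_⟩, ?_⟩
  · exact fun x y hxy => hBend.1.1 (by simp [Function.comp, hxy])
  · intro c
    obtain ⟨c', hc'⟩ := hCend.1.2 c
    exact ⟨h c', hc'⟩
  · intro u v
    exact ⟨hgh u v, fun e => hBend.2 u v (hhg _ _ e)⟩
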